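/- arXiv:1607.03936 — 3 statements merged into one kernel-verified Lean document; each statement's English description precedes it below -/
import Mathlib

section
/- Let V be a real Hilbert space and T : V → V a bounded, invertible, self-adjoint, positive-definite linear operator. Then for every f ∈ V, ⟨T⁻¹ f, f⟩ = sup over nonzero v ∈ V of ⟨v, f⟩² / ⟨T v, v⟩. -/
open scoped RealInnerProductSpace

/-- For a bounded, invertible, self-adjoint, positive-definite operator `T` on a real
Hilbert space, `⟪T⁻¹ f, f⟫ = sup over nonzero v of ⟪v, f⟫² / ⟪T v, v⟫`. -/
theorem stmt0 {V : Type*} [NormedAddCommGroup V] [InnerProductSpace ℝ V] [CompleteSpace V]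
    (T Tinv : V →L[ℝ] V)
    (hinv₁ : ∀ x, T (Tinv x) = x) (hinv₂ : ∀ x, Tinv (T x) = x)
    (hsym : ∀ u v : V, ⟪T u, v⟫ = ⟪u, T v⟫)
    (hpos : ∀ v : V, v ≠ 0 → 0 < ⟪T v, v⟫)
    (f : V) :
    ⟪Tinv f, f⟫ = ⨆ v : {v : V // v ≠ 0}, (⟪(v : V), f⟫) ^ 2 / ⟪T v, (v : V)⟫ := by
  classical
  set g := Tinv f with hg
  have hTg : T g = f := hinv₁ f
  rcases eq_or_ne f 0 with hf0 | hf0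
  · have hg0 : g = 0 := by rw [hg, hf0, map_zero]
    simp only [hf0, inner_zero_right, hg0, ne_eq]
    rcases isEmpty_or_nonempty {v : V // v ≠ 0} with h | h
    · rw [Real.iSup_of_isEmpty]
    · simp
  · have hg0 : g ≠ 0 := by
      intro h
      apply hf0
      rw [← hTg, h, map_zero]
    have hnn : ∀ w : V, 0 ≤ ⟪T w, w⟫ := by
      intro w
      rcases eq_or_ne w 0 with h | h
      · simp [h]
      · exact (hpos w h).le
    have hsym' : ∀ u v : V, ⟪T u, v⟫ = ⟪T v, u⟫ := by
      intro u v; rw [hsym, real_inner_comm]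
    have CS : ∀ v : V, ⟪T v, g⟫ ^ 2 ≤ ⟪T v, v⟫ * ⟪T g, g⟫ := by
      intro v
      have hq : ∀ x : ℝ, 0 ≤ ⟪T g, g⟫ * x ^ 2 + (2 * ⟪T v, g⟫) * x + ⟪T v, v⟫ := by
        intro x
        have h := hnn (x • g + v)
        have expand : ⟪T (x • g + v), x • g + v⟫
            = ⟪T g, g⟫ * x ^ 2 + (2 * ⟪T v, g⟫) * x + ⟪T v, v⟫ := by
          rw [map_add, map_smul]
          simp only [inner_add_left, inner_add_right, inner_smul_left, inner_smul_right,
            RingHom.id_apply, starRingEnd_apply, star_trivial]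
          rw [hsym' g v]
          ring
        linarith [expand ▸ h]
      have hq' : ∀ x : ℝ, 0 ≤ ⟪T g, g⟫ * (x * x) + (2 * ⟪T v, g⟫) * x + ⟪T v, v⟫ := by
        intro x; have := hq x; rw [sq] at this; linarith
      have hd := discrim_le_zero hq'
      rw [discrim] at hd
      nlinarith
    have hgf : 0 < ⟪g, f⟫ := by
      have := hpos g hg0
      rwa [hTg, real_inner_comm] at this
    have hTgg : ⟪T g, g⟫ = ⟪g, f⟫ := by rw [hTg, real_inner_comm]
    have bdd : ∀ v : {v : V // v ≠ 0}, ⟪(v : V), f⟫ ^ 2 / ⟪T v, (v : V)⟫ ≤ ⟪g, f⟫ := by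
      rintro ⟨v, hv⟩
      have hTv := hpos v hv
      rw [div_le_iff₀ hTv]
      have hvf : ⟪v, f⟫ = ⟪T v, g⟫ := by rw [← hTg, hsym]
      calc ⟪v, f⟫ ^ 2 = ⟪T v, g⟫ ^ 2 := by rw [hvf]
        _ ≤ ⟪T v, v⟫ * ⟪T g, g⟫ := CS v
        _ = ⟪g, f⟫ * ⟪T v, v⟫ := by rw [hTgg]; ring
    have : Nonempty {v : V // v ≠ 0} := ⟨⟨g, hg0⟩⟩
    apply le_antisymm
    · have hval : ⟪g, f⟫ = ⟪g, f⟫ ^ 2 / ⟪T g, g⟫ := by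
        rw [hTgg, sq]
        field_simp
      show ⟪g, f⟫ ≤ _
      rw [hval]
      have hba : BddAbove (Set.range fun v : {v : V // v ≠ 0} =>
          ⟪(v : V), f⟫ ^ 2 / ⟪T v, (v : V)⟫) := by
        refine ⟨⟪g, f⟫, ?_⟩
        rintro x ⟨v, rfl⟩
        exact bdd v
      exact le_ciSup hba ⟨g, hg0⟩
    · exact ciSup_le bdd
end

section
/- Let V be a real Hilbert space, W ⊆ V a dense subspace, and T : V → V bounded, self-adjoint, positive-definite, invertible. Then for every f ∈ V, ⟨T⁻¹ f, f⟩ = sup over nonzero w ∈ W of ⟨w, f⟩² / ⟨T w, w⟩. -/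
open scoped RealInnerProductSpace

/-!
Put `g = T⁻¹ f`. Since `⟪w, f⟫ = ⟪T w, g⟫`, the Cauchy–Schwarz inequality for the positive
symmetric form `(u, v) ↦ ⟪T u, v⟫` bounds every quotient `⟪w, f⟫² / ⟪T w, w⟫` by
`⟪T g, g⟫ = ⟪T⁻¹ f, f⟫`, and the bound is attained at `w = g`. The quotient is continuous at
`g ≠ 0`, so values arbitrarily close to the bound are attained on the dense set `W \ {0}`.
-/

theorem ciSup_eq_of_mem_closure_of_continuousAt {X α : Type*} [TopologicalSpace X]
    [ConditionallyCompleteLinearOrder α] [TopologicalSpace α] [OrderTopology α]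
    {s : Set X} {φ : X → α} {x₀ : X} (hx₀ : x₀ ∈ closure s) (hφ : ContinuousAt φ x₀)
    (hle : ∀ x ∈ s, φ x ≤ φ x₀) :
    ⨆ x : s, φ x = φ x₀ := by
  have hlub : IsLUB (φ '' s) (φ x₀) :=
    isLUB_of_mem_closure (Set.forall_mem_image.2 hle) (mem_closure_image hφ hx₀)
  exact hlub.ciSup_set_eq (closure_nonempty_iff.1 ⟨x₀, hx₀⟩)

section PositiveForm

variable {V : Type*} [NormedAddCommGroup V] [InnerProductSpace ℝ V] {T : V →L[ℝ] V}

theorem sq_inner_apply_le_mul (hsym : ∀ u v : V, ⟪T u, v⟫ = ⟪u, T v⟫)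
    (hnonneg : ∀ v : V, 0 ≤ ⟪T v, v⟫) (u v : V) :
    ⟪T u, v⟫ ^ 2 ≤ ⟪T u, u⟫ * ⟪T v, v⟫ :=
  LinearMap.BilinForm.apply_sq_le_of_symm ((innerₗ V).comp (T : V →ₗ[ℝ] V)) hnonneg
    ⟨fun u v ↦ (hsym u v).trans (real_inner_comm _ _)⟩ u v

theorem sq_inner_apply_div_le (hsym : ∀ u v : V, ⟪T u, v⟫ = ⟪u, T v⟫)
    (hnonneg : ∀ v : V, 0 ≤ ⟪T v, v⟫) (g w : V) :
    ⟪w, T g⟫ ^ 2 / ⟪T w, w⟫ ≤ ⟪T g, g⟫ := by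
  refine div_le_of_le_mul₀ (hnonneg w) (hnonneg g) ?_
  rw [← hsym, mul_comm]
  exact sq_inner_apply_le_mul hsym hnonneg w g

theorem sq_inner_apply_self_div (g : V) : ⟪g, T g⟫ ^ 2 / ⟪T g, g⟫ = ⟪T g, g⟫ := by
  rw [real_inner_comm, sq, mul_self_div_self]

theorem iSup_sq_inner_apply_div_eq {s : Set V} (hs : Dense s)
    (hsym : ∀ u v : V, ⟪T u, v⟫ = ⟪u, T v⟫) (hpos : ∀ v : V, v ≠ 0 → 0 < ⟪T v, v⟫) (g : V) :
    ⨆ w : {w : V // w ∈ s ∧ w ≠ 0}, ⟪(w : V), T g⟫ ^ 2 / ⟪T w, (w : V)⟫ = ⟪T g, g⟫ := by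
  have hnonneg (v : V) : 0 ≤ ⟪T v, v⟫ := by
    rcases eq_or_ne v 0 with rfl | hv
    · simp
    · exact (hpos v hv).le
  rcases eq_or_ne g 0 with rfl | hg
  · simp
  have : Nontrivial V := nontrivial_of_ne g 0 hg
  have hcont : ContinuousAt (fun v : V ↦ ⟪v, T g⟫ ^ 2 / ⟪T v, v⟫) g :=
    ContinuousAt.div (by fun_prop) (by fun_prop) (hpos g hg).ne'
  rw [← sq_inner_apply_self_div g]
  exact ciSup_eq_of_mem_closure_of_continuousAt (s := s \ {0}) (hs.sdiff_singleton 0 g) hcont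
    fun w _ ↦ (sq_inner_apply_div_le hsym hnonneg g w).trans (sq_inner_apply_self_div g).ge

end PositiveForm

theorem stmt2_general {V : Type*} [NormedAddCommGroup V] [InnerProductSpace ℝ V]
    (W : Submodule ℝ V) (hW : Dense (W : Set V))
    (T Tinv : V →L[ℝ] V)
    (hinv₁ : ∀ x, T (Tinv x) = x)
    (hsym : ∀ u v : V, ⟪T u, v⟫ = ⟪u, T v⟫)
    (hpos : ∀ v : V, v ≠ 0 → 0 < ⟪T v, v⟫)
    (f : V) :
    ⟪Tinv f, f⟫
      = ⨆ w : {w : V // w ∈ W ∧ w ≠ 0}, (⟪(w : V), f⟫) ^ 2 / ⟪T w, (w : V)⟫ := by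
  have key := iSup_sq_inner_apply_div_eq hW hsym hpos (Tinv f)
  rw [hinv₁] at key
  exact (real_inner_comm _ _).trans key.symm

/-- Variational characterization of `⟪T⁻¹ f, f⟫` with the supremum taken over a dense
subspace `W` of the real Hilbert space `V`. -/
theorem stmt2 {V : Type*} [NormedAddCommGroup V] [InnerProductSpace ℝ V] [CompleteSpace V]
    (W : Submodule ℝ V) (hW : Dense (W : Set V))
    (T Tinv : V →L[ℝ] V)
    (hinv₁ : ∀ x, T (Tinv x) = x) (hinv₂ : ∀ x, Tinv (T x) = x)
    (hsym : ∀ u v : V, ⟪T u, v⟫ = ⟪u, T v⟫)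
    (hpos : ∀ v : V, v ≠ 0 → 0 < ⟪T v, v⟫)
    (f : V) :
    ⟪Tinv f, f⟫
      = ⨆ w : {w : V // w ∈ W ∧ w ≠ 0}, (⟪(w : V), f⟫) ^ 2 / ⟪T w, (w : V)⟫ :=
  stmt2_general W hW T Tinv hinv₁ hsym hpos f
end

section
/- Let A, C, D be symmetric positive-definite n×n real matrices and B an m×n real matrix of full row rank. Suppose the image of Bᵀ is an invariant subspace on which the relevant operators are well-behaved; define the BFBT approximation S̃⁻¹ := (B C⁻¹ Bᵀ)⁻¹ (B C⁻¹ A D⁻¹ Bᵀ) (B D⁻¹ Bᵀ)⁻¹. If the commutator A D⁻¹ Bᵀ − Bᵀ X = 0 holds exactly for X := (B C⁻¹ Bᵀ)⁻¹ (B C⁻¹ A D⁻¹ Bᵀ) and X is invertible, then S̃⁻¹ = (B A⁻¹ Bᵀ)⁻¹, i.e., BFBT equals the exact inverse Schur complement. -/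
open Matrix

/-
Write `S = B A⁻¹ Bᵀ` and `S_D = B D⁻¹ Bᵀ`. Multiplying the commutator identity
`A D⁻¹ Bᵀ = Bᵀ X` on the left by `B A⁻¹` gives `S X = S_D`, so `S = S_D X⁻¹` and
`S⁻¹ = X S_D⁻¹`, which is the BFBT approximation once `X` is substituted.
-/

namespace Matrix

variable {R : Type*} [CommRing R]

theorem mul_inv_mul_mul_eq_of_intertwine {ι κ μ : Type*} [Fintype ι] [DecidableEq ι] [Fintype κ]
    {A E : Matrix ι ι R} (hA : IsUnit A.det)
    (B : Matrix μ ι R) {P : Matrix ι κ R} {X : Matrix κ κ R} (h : A * E * P = P * X) :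
    B * A⁻¹ * P * X = B * E * P := by
  calc B * A⁻¹ * P * X = B * A⁻¹ * (A * E * P) := by rw [h, Matrix.mul_assoc]
    _ = B * (A⁻¹ * A) * E * P := by simp only [Matrix.mul_assoc]
    _ = B * E * P := by rw [nonsing_inv_mul A hA, Matrix.mul_one]

theorem inv_eq_mul_inv_of_mul_eq {κ : Type*} [Fintype κ] [DecidableEq κ]
    {S T X : Matrix κ κ R} (hX : IsUnit X.det) (h : S * X = T) :
    S⁻¹ = X * T⁻¹ := by
  have hS : S = T * X⁻¹ := by rw [← h, Matrix.mul_assoc, mul_nonsing_inv X hX, Matrix.mul_one]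
  rw [hS, Matrix.mul_inv_rev, nonsing_inv_nonsing_inv X hX]

end Matrix

theorem stmt5_general {n m : ℕ} (A C D : Matrix (Fin n) (Fin n) ℝ)
    (hA : A.PosDef)
    (B : Matrix (Fin m) (Fin n) ℝ)
    (X : Matrix (Fin m) (Fin m) ℝ)
    (hX : X = (B * C⁻¹ * Bᵀ)⁻¹ * (B * C⁻¹ * A * D⁻¹ * Bᵀ))
    (hXinv : IsUnit X.det)
    (hcomm : A * D⁻¹ * Bᵀ = Bᵀ * X) :
    (B * C⁻¹ * Bᵀ)⁻¹ * (B * C⁻¹ * A * D⁻¹ * Bᵀ) * (B * D⁻¹ * Bᵀ)⁻¹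
      = (B * A⁻¹ * Bᵀ)⁻¹ := by
  have hSchur : B * A⁻¹ * Bᵀ * X = B * D⁻¹ * Bᵀ :=
    mul_inv_mul_mul_eq_of_intertwine ((isUnit_iff_isUnit_det A).mp hA.isUnit) B hcomm
  rw [← hX, inv_eq_mul_inv_of_mul_eq hXinv hSchur]

/-- If the commutator `A D⁻¹ Bᵀ = Bᵀ X` holds exactly for
`X = (B C⁻¹ Bᵀ)⁻¹ (B C⁻¹ A D⁻¹ Bᵀ)` and `X` is invertible, then the BFBT approximation
equals the exact inverse Schur complement `(B A⁻¹ Bᵀ)⁻¹`. -/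
theorem stmt5 {n m : ℕ} (A C D : Matrix (Fin n) (Fin n) ℝ)
    (hA : A.PosDef) (hC : C.PosDef) (hD : D.PosDef)
    (B : Matrix (Fin m) (Fin n) ℝ) (hB : B.rank = m)
    (X : Matrix (Fin m) (Fin m) ℝ)
    (hX : X = (B * C⁻¹ * Bᵀ)⁻¹ * (B * C⁻¹ * A * D⁻¹ * Bᵀ))
    (hXinv : IsUnit X.det)
    (hcomm : A * D⁻¹ * Bᵀ = Bᵀ * X) :
    (B * C⁻¹ * Bᵀ)⁻¹ * (B * C⁻¹ * A * D⁻¹ * Bᵀ) * (B * D⁻¹ * Bᵀ)⁻¹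
      = (B * A⁻¹ * Bᵀ)⁻¹ :=
  stmt5_general A C D hA B X hX hXinv hcomm
end
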